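/- arXiv:2502.15206 — 3 statements merged into one kernel-verified Lean document; each statement's English description precedes it below -/
import Mathlib

section
/- Let n ≥ 2 and let 𝓑 ⊆ S^n satisfy Condition (B)' alone: for every pair of distinct A, B ∈ 𝓑, A_< ∩ B_≤ = ∅. Then J_+(𝓑) is rank-one generated: J_+(𝓑) = convexHull(J_+(𝓑) ∩ Γ^n). -/
/-!
Homogenizing Condition (B)' shows that the cones `{x | xᵀ B x < 0}`, `B ∈ 𝓑`, are pairwise
disjoint. Call `x` feasible if `xᵀ B x ≥ 0` for all `B ∈ 𝓑`. The trace-one slice of the cone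
`{x xᵀ | x feasible}` is compact, so by Hahn–Banach it suffices to show `f X ≥ 0` for `X ∈ J₊(𝓑)`
and every linear functional `f` with `f (x xᵀ) ≥ 0` for all feasible `x`. If `f (z zᵀ) < 0`, then
`z` violates exactly one `A ∈ 𝓑`. For any `v` with `f (v vᵀ) < 0`, after replacing `v` by `-v`
if needed, the form `f (x xᵀ)` stays negative on the segment `[z, v]`, so each point of it violates
exactly one constraint; by connectedness `v` violates `A` as well. The Sturm–Zhang decomposition writes
`X = ∑ vᵢ vᵢᵀ` with `vᵢᵀ A vᵢ ≥ 0`, hence `f (vᵢ vᵢᵀ) ≥ 0` for all `i`.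
-/

open Set Filter Topology Real Matrix Function

theorem LinearMap.nonneg_of_mem_closure {N : Type*} [AddCommMonoid N] [Module ℝ N]
    {S : Set N} {f : Module.Dual ℝ N} (hS : ∀ x ∈ S, 0 ≤ f x)
    {X : N} (hX : X ∈ AddSubmonoid.closure S) : 0 ≤ f X := by
  induction hX using AddSubmonoid.closure_induction with
  | mem x hx => exact hS x hx
  | zero => simp
  | add x y _ _ hx hy => rw [map_add]; exact add_nonneg hx hy

namespace QuadraticMap

variable {M N : Type*} [AddCommGroup M] [Module ℝ M] [AddCommGroup N] [Module ℝ N]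

theorem map_smul_add_smul (Q : QuadraticMap ℝ M N) (a b : ℝ) (x y : M) :
    Q (a • x + b • y) = (a * a) • Q x + (b * b) • Q y + (a * b) • polar Q x y := by
  rw [QuadraticMap.map_add (⇑Q), Q.map_smul, Q.map_smul, polar_smul_left, polar_smul_right,
    smul_smul]

theorem map_rotate_add_map_rotate (Q : QuadraticMap ℝ M N) (θ : ℝ) (u v : M) :
    Q (cos θ • u + sin θ • v) + Q (sin θ • u - cos θ • v) = Q u + Q v := by
  rw [sub_eq_add_neg, ← neg_smul, map_smul_add_smul, map_smul_add_smul]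
  linear_combination (norm := module) (sin_sq_add_cos_sq θ) • (Q u + Q v)

theorem continuous_apply_smul_add_smul (q : QuadraticMap ℝ M ℝ) {a b : ℝ → ℝ}
    (ha : Continuous a) (hb : Continuous b) (x y : M) :
    Continuous fun t => q (a t • x + b t • y) := by
  simp only [map_smul_add_smul, smul_eq_mul]
  fun_prop

theorem exists_map_rotate_eq_zero (q : QuadraticMap ℝ M ℝ) {u v : M} (hu : q u ≤ 0)
    (hv : 0 ≤ q v) : ∃ θ, q (cos θ • u + sin θ • v) = 0 := by
  have hcont := continuous_apply_smul_add_smul q continuous_cos continuous_sin u v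
  obtain ⟨θ, -, hθ⟩ := intermediate_value_Icc pi_div_two_pos.le hcont.continuousOn
    (show (0 : ℝ) ∈ Icc _ _ by simpa using And.intro hu hv)
  exact ⟨θ, hθ⟩

theorem map_smul_add_smul_neg_of_polar_nonpos (q : QuadraticMap ℝ M ℝ) {x y : M} (hx : q x < 0)
    (hy : q y < 0) (hxy : polar q x y ≤ 0) {a b : ℝ} (ha : 0 ≤ a) (hb : 0 ≤ b) (hab : a + b = 1) :
    q (a • x + b • y) < 0 := by
  rw [map_smul_add_smul, smul_eq_mul, smul_eq_mul, smul_eq_mul]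
  have hcross : a * b * polar q x y ≤ 0 := mul_nonpos_of_nonneg_of_nonpos (mul_nonneg ha hb) hxy
  rcases ha.lt_or_eq with ha | rfl
  · nlinarith [mul_neg_of_pos_of_neg (mul_pos ha ha) hx, mul_nonneg hb hb]
  · obtain rfl : b = 1 := by linarith
    linarith

theorem neg_of_pairwise_disjoint {ι : Type*} (q : ι → QuadraticMap ℝ M ℝ)
    (hq : Pairwise (Disjoint on fun i => {x | q i x < 0}))
    (p : QuadraticMap ℝ M ℝ) (hp : ∀ x, (∀ i, 0 ≤ q i x) → 0 ≤ p x)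
    {z : M} {a : ι} (hpz : p z < 0) (hqz : q a z < 0) {v : M} (hpv : p v < 0) : q a v < 0 := by
  have hviol : ∀ x, p x < 0 → ∃ i, q i x < 0 := fun x hx => by
    by_contra! h
    exact (hp x h).not_gt hx
  wlog hpol : polar p z v ≤ 0 generalizing v
  · simpa using this (v := -v) (by rwa [p.map_neg]) (by rw [polar_neg_right]; linarith)
  let γ : ℝ → M := fun t => (1 - t) • z + t • v
  have hγ (c : QuadraticMap ℝ M ℝ) : Continuous fun t => c (γ t) :=
    continuous_apply_smul_add_smul c (by fun_prop) continuous_id z v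
  obtain ⟨i, hi⟩ := hviol v hpv
  by_contra! hav
  have hia : i ≠ a := by
    rintro rfl
    exact hav.not_gt hi
  -- Along the segment exactly one constraint is violated at each point; `[0, 1]` is connected.
  obtain ⟨t, -, htU, htV⟩ := isPreconnected_Icc {t | q a (γ t) < 0}
    (⋃ j ∈ {j | j ≠ a}, {t | q j (γ t) < 0})
    (isOpen_lt (hγ _) continuous_const)
    (isOpen_biUnion fun j _ => isOpen_lt (hγ _) continuous_const)
    (fun t ht => by
      obtain ⟨j, hj⟩ := hviol (γ t)
        (map_smul_add_smul_neg_of_polar_nonpos p hpz hpv hpol (by linarith [ht.2]) ht.1 (by ring))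
      by_cases hja : j = a
      · exact Or.inl (hja ▸ hj)
      · exact Or.inr (mem_biUnion hja hj))
    ⟨0, left_mem_Icc.2 zero_le_one, by simpa [γ] using hqz⟩
    ⟨1, right_mem_Icc.2 zero_le_one, mem_biUnion hia (by simpa [γ] using hi)⟩
  obtain ⟨j, hja, hj⟩ := mem_iUnion₂.1 htV
  exact disjoint_left.1 (hq (Ne.symm hja)) htU hj

/-- The rank-one decomposition of Sturm and Zhang: a pair `u, v` with `f (Q u) < 0 < f (Q v)` is
rotated into a pair whose first member is `f ∘ Q`-isotropic, preserving `Q u + Q v`. -/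
theorem multiset_sum_mem_closure_nonneg (Q : QuadraticMap ℝ M N) (f : Module.Dual ℝ N)
    (s : Multiset M) (hs : 0 ≤ f (s.map Q).sum) :
    (s.map Q).sum ∈ AddSubmonoid.closure (Q '' {v | 0 ≤ f (Q v)}) := by
  classical
  induction hk : Multiset.card s using Nat.strong_induction_on generalizing s with
  | _ k ih =>
  by_cases hall : ∀ v ∈ s, 0 ≤ f (Q v)
  · exact AddSubmonoid.multiset_sum_mem _ _ fun _ hx => by
      obtain ⟨v, hv, rfl⟩ := Multiset.mem_map.1 hx
      exact AddSubmonoid.subset_closure ⟨v, hall v hv, rfl⟩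
  push Not at hall
  obtain ⟨u, hu, hfu⟩ := hall
  rw [← Multiset.cons_erase hu] at hs hk ⊢
  obtain ⟨v, hv, hfv⟩ : ∃ v ∈ s.erase u, 0 < f (Q v) := by
    by_contra! h
    have := Multiset.sum_map_le_sum_map _ (fun _ => (0 : ℝ)) h
    simp only [Multiset.map_cons, Multiset.sum_cons, map_add, map_multiset_sum,
      Multiset.map_map, Function.comp_def, Multiset.map_const', Multiset.sum_replicate,
      smul_zero] at hs this
    linarith
  rw [← Multiset.cons_erase hv] at hs hk ⊢
  obtain ⟨θ, hθ⟩ := exists_map_rotate_eq_zero (f.compQuadraticMap Q) hfu.le hfv.le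
  set x := cos θ • u + sin θ • v
  set y := sin θ • u - cos θ • v
  have hrot : Q u + (Q v + (((s.erase u).erase v).map Q).sum) =
      Q x + ((y ::ₘ (s.erase u).erase v).map Q).sum := by
    rw [Multiset.map_cons, Multiset.sum_cons, ← add_assoc, ← add_assoc,
      map_rotate_add_map_rotate]
  simp only [Multiset.map_cons, Multiset.sum_cons] at hs hk ⊢
  rw [hrot, map_add, show f (Q x) = 0 from hθ, zero_add] at hs
  rw [hrot]
  refine add_mem (AddSubmonoid.subset_closure ⟨x, hθ.ge, rfl⟩) (ih _ ?_ _ hs rfl)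
  simp only [Multiset.card_cons] at hk ⊢
  omega

theorem nonneg_of_pairwise_disjoint (Q : QuadraticMap ℝ M N) {ι : Type*}
    (g : ι → Module.Dual ℝ N) (hg : Pairwise (Disjoint on fun i => {x | g i (Q x) < 0}))
    (f : Module.Dual ℝ N) (hf : ∀ x, (∀ i, 0 ≤ g i (Q x)) → 0 ≤ f (Q x))
    (s : Multiset M) (hs : ∀ i, 0 ≤ g i (s.map Q).sum) : 0 ≤ f (s.map Q).sum := by
  by_cases hpos : ∀ v, 0 ≤ f (Q v)
  · rw [map_multiset_sum, Multiset.map_map]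
    exact Multiset.sum_nonneg fun _ hx => by
      obtain ⟨v, -, rfl⟩ := Multiset.mem_map.1 hx
      exact hpos v
  push Not at hpos
  obtain ⟨z, hz⟩ := hpos
  obtain ⟨a, ha⟩ : ∃ a, g a (Q z) < 0 := by
    by_contra! h
    exact (hf z h).not_gt hz
  refine LinearMap.nonneg_of_mem_closure ?_ (multiset_sum_mem_closure_nonneg Q (g a) s (hs a))
  rintro _ ⟨v, hv, rfl⟩
  by_contra! hfv
  exact (show 0 ≤ g a (Q v) from hv).not_gt <|
    neg_of_pairwise_disjoint (fun i => (g i).compQuadraticMap Q) hg (f.compQuadraticMap Q) hf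
      hz ha hfv

end QuadraticMap

section ConvexHull

variable {E : Type*} [AddCommGroup E] [Module ℝ E] [TopologicalSpace E] [IsTopologicalAddGroup E]
  [ContinuousSMul ℝ E] [FiniteDimensional ℝ E]

/-- By Carathéodory, the hull is the union over `k ≤ finrank ℝ E + 1` of the images of
`stdSimplex ℝ (Fin k) × sᵏ`. -/
theorem isCompact_convexHull {s : Set E} (hs : IsCompact s) : IsCompact (convexHull ℝ s) := by
  have hcara : convexHull ℝ s = ⋃ k : Fin (Module.finrank ℝ E + 2),
      (fun p : (Fin k → ℝ) × (Fin k → E) => ∑ i, p.1 i • p.2 i) ''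
        (stdSimplex ℝ (Fin k) ×ˢ univ.pi fun _ => s) := by
    refine Subset.antisymm (fun x hx => ?_) (iUnion_subset fun k => ?_)
    · obtain ⟨ι, _, z, w, hzs, hz, hw0, hw1, rfl⟩ := eq_pos_convex_span_of_mem_convexHull hx
      have hcard : Fintype.card ι < Module.finrank ℝ E + 2 := by
        have := hz.card_le_finrank_succ
        have := Submodule.finrank_le (vectorSpan ℝ (range z))
        omega
      let e := Fintype.equivFin ι
      refine mem_iUnion.2 ⟨⟨_, hcard⟩, (w ∘ e.symm, z ∘ e.symm), ⟨⟨fun i => (hw0 _).le, ?_⟩,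
        fun i _ => hzs (mem_range_self _)⟩, ?_⟩
      · simpa [Function.comp_def] using (e.symm.sum_comp w).trans hw1
      · exact e.symm.sum_comp fun i => w i • z i
    · rintro _ ⟨⟨w, z⟩, ⟨hw, hz⟩, rfl⟩
      exact (convex_convexHull ℝ s).sum_mem (fun i _ => hw.1 i) hw.2
        fun i _ => subset_convexHull ℝ s (hz i (mem_univ i))
  rw [hcara]
  exact isCompact_iUnion fun k =>
    ((isCompact_stdSimplex ℝ _).prod (isCompact_univ_pi fun _ => hs)).image (by fun_prop)

theorem mem_convexHull_of_forall_le [LocallyConvexSpace ℝ E] [T2Space E] {s : Set E}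
    (hs : IsCompact s) {x : E} (h : ∀ (f : StrongDual ℝ E) (u : ℝ), (∀ y ∈ s, u ≤ f y) → u ≤ f x) :
    x ∈ convexHull ℝ s := by
  by_contra hx
  obtain ⟨f, u, hfx, hfs⟩ := geometric_hahn_banach_point_closed (convex_convexHull ℝ s)
    (isCompact_convexHull hs).isClosed hx
  exact (h f u fun y hy => (hfs y (subset_convexHull ℝ s hy)).le).not_gt hfx

end ConvexHull

namespace Matrix

variable {n : Type*}

instance {m : Type*} : LocallyConvexSpace ℝ (Matrix m n ℝ) :=
  inferInstanceAs (LocallyConvexSpace ℝ (m → n → ℝ))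

def vecMulVecSelf : QuadraticMap ℝ (n → ℝ) (Matrix n n ℝ) :=
  LinearMap.BilinMap.toQuadraticMap (vecMulVecBilin ℝ ℝ)

@[simp]
theorem vecMulVecSelf_apply (x : n → ℝ) : vecMulVecSelf x = vecMulVec x x := rfl

variable [Fintype n]

theorem smul_dotProduct_mulVec_smul (A : Matrix n n ℝ) (c : ℝ) (x : n → ℝ) :
    (c • x) ⬝ᵥ A *ᵥ (c • x) = c * c * (x ⬝ᵥ A *ᵥ x) := by
  simp only [mulVec_smul, smul_dotProduct, dotProduct_smul, smul_eq_mul]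
  ring

def frobeniusDual (B : Matrix n n ℝ) : Module.Dual ℝ (Matrix n n ℝ) where
  toFun X := ∑ i, ∑ j, B i j * X i j
  map_add' X Y := by simp only [add_apply, mul_add, Finset.sum_add_distrib]
  map_smul' c X := by
    simp only [smul_apply, smul_eq_mul, Finset.mul_sum, RingHom.id_apply, mul_left_comm]

theorem frobeniusDual_apply (B X : Matrix n n ℝ) :
    frobeniusDual B X = ∑ i, ∑ j, B i j * X i j := rfl

theorem frobeniusDual_vecMulVec (B : Matrix n n ℝ) (x : n → ℝ) :
    frobeniusDual B (vecMulVec x x) = x ⬝ᵥ B *ᵥ x := by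
  simp only [frobeniusDual_apply, vecMulVec_apply, dotProduct, mulVec, Finset.mul_sum]
  exact Finset.sum_congr rfl fun i _ => Finset.sum_congr rfl fun j _ => by ring

theorem PosSemidef.exists_multiset_sum_vecMulVecSelf {X : Matrix n n ℝ} (hX : X.PosSemidef) :
    ∃ s : Multiset (n → ℝ), (s.map vecMulVecSelf).sum = X := by
  obtain ⟨m, v, rfl⟩ := posSemidef_iff_eq_sum_vecMulVec.1 hX
  exact ⟨Finset.univ.val.map v, by simp [Function.comp_def, Finset.sum_eq_multiset_sum]⟩

theorem isCompact_setOf_dotProduct_self_eq_one : IsCompact {x : n → ℝ | x ⬝ᵥ x = 1} := by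
  refine Metric.isCompact_of_isClosed_isBounded (isClosed_eq (by fun_prop) continuous_const)
    ((Metric.isBounded_closedBall (x := 0) (r := 1)).subset fun x hx => ?_)
  rw [mem_closedBall_zero_iff, pi_norm_le_iff_of_nonneg zero_le_one]
  intro i
  rw [Real.norm_eq_abs, abs_le_one_iff_mul_self_le_one, ← hx.out]
  exact Finset.single_le_sum (fun j _ => mul_self_nonneg (x j)) (Finset.mem_univ i)

theorem mem_convexHull_image_vecMulVecSelf {G : Set (n → ℝ)} (hG : IsClosed G)
    (hGsmul : ∀ x ∈ G, ∀ c : ℝ, 0 < c → c • x ∈ G) {X : Matrix n n ℝ} (hX : 0 < X.trace)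
    (h : ∀ f : Module.Dual ℝ (Matrix n n ℝ), (∀ x ∈ G, 0 ≤ f (vecMulVecSelf x)) → 0 ≤ f X) :
    X ∈ convexHull ℝ (vecMulVecSelf '' G) := by
  set S := vecMulVecSelf '' (G ∩ {x | x ⬝ᵥ x = 1})
  have hS : IsCompact S :=
    (isCompact_setOf_dotProduct_self_eq_one.inter_left hG).image
      (show Continuous fun x : n → ℝ => vecMulVec x x by fun_prop)
  have hXS : X.trace⁻¹ • X ∈ convexHull ℝ S := by
    refine mem_convexHull_of_forall_le hS fun f u hfu => ?_
    -- `f - u • trace` is nonnegative on `S`, hence by homogeneity on all of `vecMulVecSelf '' G`.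
    have key := h (f.toLinearMap - u • traceLinearMap n ℝ ℝ) fun x hx => ?_
    · simp only [LinearMap.sub_apply, LinearMap.smul_apply, ContinuousLinearMap.coe_coe,
        traceLinearMap_apply, smul_eq_mul, sub_nonneg] at key
      rw [map_smul, smul_eq_mul, le_inv_mul_iff₀ hX, mul_comm]
      exact key
    rcases eq_or_ne x 0 with rfl | hx0
    · simp
    have hxx : 0 < x ⬝ᵥ x := (Finset.sum_nonneg fun i _ => mul_self_nonneg (x i)).lt_of_ne'
      (dotProduct_self_eq_zero.not.2 hx0)
    set c := √(x ⬝ᵥ x)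
    have hc : 0 < c := Real.sqrt_pos.2 hxx
    have hcc : c * c = x ⬝ᵥ x := Real.mul_self_sqrt hxx.le
    have hu := hfu _ ⟨c⁻¹ • x, ⟨hGsmul x hx _ (inv_pos.2 hc), ?_⟩, rfl⟩
    · rw [QuadraticMap.map_smul, map_smul, smul_eq_mul, ← mul_inv, hcc, le_inv_mul_iff₀ hxx] at hu
      simpa [trace_vecMulVec, mul_comm] using hu
    · simp only [mem_ofPred_eq, smul_dotProduct, dotProduct_smul, smul_eq_mul, ← mul_assoc, ← hcc]
      field_simp
  have hXeq : X = X.trace • X.trace⁻¹ • X := by rw [smul_smul, mul_inv_cancel₀ hX.ne', one_smul]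
  rw [hXeq]
  refine convexHull_mono ?_ (convexHull_smul X.trace S ▸ smul_mem_smul_set hXS)
  rintro _ ⟨_, ⟨x, ⟨hx, -⟩, rfl⟩, rfl⟩
  refine ⟨√X.trace • x, hGsmul x hx _ (Real.sqrt_pos.2 hX), ?_⟩
  rw [QuadraticMap.map_smul, Real.mul_self_sqrt hX.le]

end Matrix

theorem disjoint_neg_of_forall_snoc {m : ℕ} {A B : Matrix (Fin (m + 1)) (Fin (m + 1)) ℝ}
    (h : ∀ u : Fin m → ℝ, ¬((Fin.snoc u 1) ⬝ᵥ A.mulVec (Fin.snoc u 1) < 0 ∧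
      (Fin.snoc u 1) ⬝ᵥ B.mulVec (Fin.snoc u 1) ≤ 0)) :
    Disjoint {x | x ⬝ᵥ A *ᵥ x < 0} {x | x ⬝ᵥ B *ᵥ x < 0} := by
  rw [disjoint_iff_inter_eq_empty, eq_empty_iff_forall_notMem]
  intro x hx
  set S := {x | x ⬝ᵥ A *ᵥ x < 0} ∩ {x | x ⬝ᵥ B *ᵥ x < 0}
  have hS : IsOpen S := by
    have (C : Matrix (Fin (m + 1)) (Fin (m + 1)) ℝ) : Continuous fun y => y ⬝ᵥ C *ᵥ y := by
      fun_prop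
    exact (isOpen_lt (this A) continuous_const).inter (isOpen_lt (this B) continuous_const)
  obtain ⟨y, ⟨hyA, hyB⟩, hy⟩ : ∃ y ∈ S, y (Fin.last m) ≠ 0 := by
    by_cases hx0 : x (Fin.last m) = 0
    · let e : Fin (m + 1) → ℝ := Pi.single (Fin.last m) 1
      have hmem : ∀ᶠ ε in 𝓝[≠] (0 : ℝ), x + ε • e ∈ S := nhdsWithin_le_nhds <|
        ((show Continuous fun ε : ℝ => x + ε • e by fun_prop).tendsto' 0 x (by simp)).eventually
          (hS.mem_nhds hx)
      obtain ⟨ε, hεS, hε⟩ := (hmem.and self_mem_nhdsWithin).exists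
      exact ⟨_, hεS, by simpa [e, hx0] using hε⟩
    · exact ⟨x, hx, hx0⟩
  set c := y (Fin.last m)
  have hyc : y = c • Fin.snoc (fun i => c⁻¹ * y i.castSucc) 1 := by
    ext i
    induction i using Fin.lastCases with
    | last => simp [c]
    | cast i => simp [mul_inv_cancel_left₀ hy]
  have hcc : 0 < c * c := mul_self_pos.2 hy
  rw [mem_ofPred_eq, hyc, smul_dotProduct_mulVec_smul] at hyA hyB
  exact h _ ⟨neg_of_mul_neg_right hyA hcc.le, (neg_of_mul_neg_right hyB hcc.le).le⟩

theorem convex_setOf_posSemidef_and_frobeniusDual_nonneg {n : Type*} [Fintype n]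
    (𝓑 : Set (Matrix n n ℝ)) :
    Convex ℝ {X : Matrix n n ℝ | X.PosSemidef ∧ ∀ B ∈ 𝓑, 0 ≤ frobeniusDual B X} := by
  rintro X ⟨hX, hXB⟩ Y ⟨hY, hYB⟩ a b ha hb -
  refine ⟨(hX.smul ha).add (hY.smul hb), fun B hB => ?_⟩
  rw [map_add, map_smul, map_smul, smul_eq_mul, smul_eq_mul]
  exact add_nonneg (mul_nonneg ha (hXB B hB)) (mul_nonneg hb (hYB B hB))

theorem ROG_of_conditionB'_general (m : ℕ)
    (𝓑 : Set (Matrix (Fin (m + 1)) (Fin (m + 1)) ℝ))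
    (hB' : ∀ A ∈ 𝓑, ∀ B ∈ 𝓑, A ≠ B → ∀ u : Fin m → ℝ,
      ¬((Fin.snoc u 1) ⬝ᵥ A.mulVec (Fin.snoc u 1) < 0 ∧
        (Fin.snoc u 1) ⬝ᵥ B.mulVec (Fin.snoc u 1) ≤ 0)) :
    {X : Matrix (Fin (m + 1)) (Fin (m + 1)) ℝ |
        X.PosSemidef ∧ ∀ B ∈ 𝓑, 0 ≤ ∑ i, ∑ j, B i j * X i j}
      = convexHull ℝ
        ({X : Matrix (Fin (m + 1)) (Fin (m + 1)) ℝ |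
            X.PosSemidef ∧ ∀ B ∈ 𝓑, 0 ≤ ∑ i, ∑ j, B i j * X i j}
          ∩ {X : Matrix (Fin (m + 1)) (Fin (m + 1)) ℝ |
            ∃ x : Fin (m + 1) → ℝ, X = vecMulVec x x}) := by
  set G := {x : Fin (m + 1) → ℝ | ∀ B ∈ 𝓑, 0 ≤ frobeniusDual B (vecMulVecSelf x)}
  have hG : IsClosed G := by
    simp only [G, ofPred_forall]
    exact isClosed_biInter fun B _ => isClosed_le continuous_const
      (by simp only [vecMulVecSelf_apply, frobeniusDual_vecMulVec]; fun_prop)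
  have hGsmul : ∀ x ∈ G, ∀ c : ℝ, 0 < c → c • x ∈ G := fun x hx c _ B hB => by
    rw [QuadraticMap.map_smul, map_smul, smul_eq_mul]
    exact mul_nonneg (mul_self_nonneg c) (hx B hB)
  have hpair :
      Pairwise (Disjoint on fun B : 𝓑 => {x | frobeniusDual B.1 (vecMulVecSelf x) < 0}) :=
    fun B C hBC => by
      simpa only [vecMulVecSelf_apply, frobeniusDual_vecMulVec] using
        disjoint_neg_of_forall_snoc (hB' B B.2 C C.2 (Subtype.coe_ne_coe.2 hBC))
  refine Subset.antisymm (fun X ⟨hX, hXB⟩ => ?_)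
    (convexHull_min inter_subset_left (convex_setOf_posSemidef_and_frobeniusDual_nonneg 𝓑))
  refine convexHull_mono (s := vecMulVecSelf '' G) ?_ ?_
  · rintro _ ⟨x, hx, rfl⟩
    exact ⟨⟨posSemidef_vecMulVec_self_star x, hx⟩, x, rfl⟩
  rcases eq_or_ne X 0 with rfl | hX0
  · exact subset_convexHull ℝ _ ⟨0, fun B _ => by simp, by simp⟩
  have htr : 0 < X.trace := hX.trace_nonneg.lt_of_ne' (hX.trace_eq_zero_iff.not.2 hX0)
  refine mem_convexHull_image_vecMulVecSelf hG hGsmul htr fun f hf => ?_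
  obtain ⟨s, rfl⟩ := hX.exists_multiset_sum_vecMulVecSelf
  exact QuadraticMap.nonneg_of_pairwise_disjoint vecMulVecSelf (fun B : 𝓑 => frobeniusDual B.1)
    hpair f (fun x hx => hf x fun B hB => hx ⟨B, hB⟩) s fun B => hXB B B.2

/-- Condition (B)' alone implies that `J₊(𝓑)` is rank-one generated.
Here `n = m + 1 ≥ 2`, and for `u ∈ ℝ^m`, `[u;1]` is `Fin.snoc u 1`. -/
theorem ROG_of_conditionB' (m : ℕ) (hm : 1 ≤ m)
    (𝓑 : Set (Matrix (Fin (m + 1)) (Fin (m + 1)) ℝ)) (h𝓑 : ∀ B ∈ 𝓑, B.IsSymm)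
    (hB' : ∀ A ∈ 𝓑, ∀ B ∈ 𝓑, A ≠ B → ∀ u : Fin m → ℝ,
      ¬((Fin.snoc u 1) ⬝ᵥ A.mulVec (Fin.snoc u 1) < 0 ∧
        (Fin.snoc u 1) ⬝ᵥ B.mulVec (Fin.snoc u 1) ≤ 0)) :
    {X : Matrix (Fin (m + 1)) (Fin (m + 1)) ℝ |
        X.PosSemidef ∧ ∀ B ∈ 𝓑, 0 ≤ ∑ i, ∑ j, B i j * X i j}
      = convexHull ℝ
        ({X : Matrix (Fin (m + 1)) (Fin (m + 1)) ℝ |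
            X.PosSemidef ∧ ∀ B ∈ 𝓑, 0 ≤ ∑ i, ∑ j, B i j * X i j}
          ∩ {X : Matrix (Fin (m + 1)) (Fin (m + 1)) ℝ |
            ∃ x : Fin (m + 1) → ℝ, X = vecMulVec x x}) :=
  ROG_of_conditionB'_general m 𝓑 hB'
end

section
/- Let B ∈ S^n and let X ∈ S^n_+ have rank r with B•X = 0. Then there exist vectors x_1, …, x_r ∈ ℝ^n such that X = Σ_{i=1}^r x_i x_iᵀ and x_iᵀ B x_i = 0 for every i = 1, …, r. -/
/-!
Write `X = ∑ᵢ yᵢ yᵢᵀ` with `r` vectors using the spectral decomposition, so that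
`∑ᵢ yᵢᵀ B yᵢ = B • X = 0`. If `y₀ᵀ B y₀ ≠ 0`, some other `yⱼ` has a value of the opposite sign.
Rotating the pair `(y₀, yⱼ)` by an angle `θ` leaves `y₀ y₀ᵀ + yⱼ yⱼᵀ` unchanged, and by the
intermediate value theorem some `θ` makes the first rotated vector `B`-isotropic. Since
`∑ᵢ yᵢᵀ B yᵢ` depends only on `∑ᵢ yᵢ yᵢᵀ`, the remaining `r - 1` vectors still have total value
zero, and induction on `r` finishes the proof.
-/

open Matrix

theorem Fintype.sum_comp_update_update {κ V M : Type*} [Fintype κ] [DecidableEq κ]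
    [AddCommMonoid M] (φ : V → M) (y : κ → V) {a b : κ} (hab : a ≠ b) {u v : V}
    (h : φ u + φ v = φ (y a) + φ (y b)) :
    ∑ i, φ (Function.update (Function.update y a u) b v i) = ∑ i, φ (y i) := by
  rw [← Finset.sum_add_sum_compl {a, b}, ← Finset.sum_add_sum_compl {a, b} fun i => φ (y i),
    Finset.sum_pair hab, Finset.sum_pair hab]
  congr 1
  · simpa [Function.update_of_ne hab] using h
  · refine Finset.sum_congr rfl fun i hi => ?_
    simp only [Finset.mem_compl, Finset.mem_insert, Finset.mem_singleton, not_or] at hi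
    rw [Function.update_of_ne hi.2, Function.update_of_ne hi.1]

namespace Matrix

variable {ι : Type*}

theorem vecMulVec_rotate_add_vecMulVec_rotate {R : Type*} [CommRing R] {c s : R}
    (hcs : c ^ 2 + s ^ 2 = 1) (v w : ι → R) :
    vecMulVec (c • v + s • w) (c • v + s • w) + vecMulVec (-s • v + c • w) (-s • v + c • w) =
      vecMulVec v v + vecMulVec w w := by
  ext i j
  simp only [add_apply, vecMulVec_apply, Pi.add_apply, Pi.smul_apply, smul_eq_mul]
  linear_combination (v i * v j + w i * w j) * hcs

variable [Fintype ι]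

theorem IsHermitian.eq_sum_eigenvalues_smul_vecMulVec {𝕜 : Type*} [RCLike 𝕜]
    [DecidableEq ι] {A : Matrix ι ι 𝕜} (hA : A.IsHermitian) :
    A = ∑ k, hA.eigenvalues k •
      vecMulVec (hA.eigenvectorBasis k) (star (hA.eigenvectorBasis k)) := by
  ext i j
  conv_lhs => rw [hA.spectral_theorem, Unitary.conjStarAlgAut_apply]
  simp only [mul_apply, diagonal_apply, Matrix.sum_apply, mul_ite, mul_zero, Finset.sum_ite_eq',
    Finset.mem_univ, if_true]
  refine Finset.sum_congr rfl fun k _ => ?_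
  simp [RCLike.real_smul_eq_coe_mul, vecMulVec_apply]
  ring

theorem PosSemidef.exists_eq_sum_vecMulVec_of_rank_eq {X : Matrix ι ι ℝ}
    (hX : X.PosSemidef) {r : ℕ} (hr : X.rank = r) :
    ∃ y : Fin r → ι → ℝ, X = ∑ i, vecMulVec (y i) (y i) := by
  classical
  set eigval := hX.isHermitian.eigenvalues
  set v : ι → ι → ℝ := fun k => √(eigval k) • ⇑(hX.isHermitian.eigenvectorBasis k)
  have hXv : X = ∑ k, vecMulVec (v k) (v k) := by
    conv_lhs => rw [hX.isHermitian.eq_sum_eigenvalues_smul_vecMulVec]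
    refine Finset.sum_congr rfl fun k _ => ?_
    rw [star_trivial, smul_vecMulVec, vecMulVec_smul, smul_smul,
      Real.mul_self_sqrt (hX.eigenvalues_nonneg k)]
  have hcard : Fintype.card {k // eigval k ≠ 0} = r := by
    rw [← hX.isHermitian.rank_eq_card_non_zero_eigs, hr]
  let e : Fin r ≃ {k // eigval k ≠ 0} := (Fintype.equivFinOfCardEq hcard).symm
  refine ⟨fun i => v (e i), ?_⟩
  have hker : ∀ k : {k // ¬eigval k ≠ 0}, vecMulVec (v k) (v k) = 0 := fun k => by
    simp [v, not_not.mp k.2]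
  rw [hXv, e.sum_comp fun k => vecMulVec (v k) (v k),
    ← Fintype.sum_subtype_add_sum_subtype (eigval · ≠ 0), Fintype.sum_eq_zero _ hker, add_zero]

theorem sum_dotProduct_mulVec_self {R κ : Type*} [CommSemiring R] [Fintype κ]
    (B : Matrix ι ι R) (y : κ → ι → R) :
    ∑ k, y k ⬝ᵥ B *ᵥ y k = ∑ i, ∑ j, B i j * (∑ k, vecMulVec (y k) (y k)) i j := by
  simp only [dotProduct, mulVec, Matrix.sum_apply, vecMulVec_apply, Finset.mul_sum]
  rw [Finset.sum_comm]
  refine Finset.sum_congr rfl fun i _ => ?_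
  rw [Finset.sum_comm]
  exact Finset.sum_congr rfl fun j _ => Finset.sum_congr rfl fun k _ => by ring

theorem exists_cos_sin_dotProduct_mulVec_eq_zero (B : Matrix ι ι ℝ) {v w : ι → ℝ}
    (h : (v ⬝ᵥ B *ᵥ v) * (w ⬝ᵥ B *ᵥ w) ≤ 0) :
    ∃ c s : ℝ, c ^ 2 + s ^ 2 = 1 ∧ (c • v + s • w) ⬝ᵥ B *ᵥ (c • v + s • w) = 0 := by
  set f : ℝ → ℝ := fun θ =>
    (Real.cos θ • v + Real.sin θ • w) ⬝ᵥ B *ᵥ (Real.cos θ • v + Real.sin θ • w)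
  have hf : Continuous f := by fun_prop
  have hzero : (0 : ℝ) ∈ Set.uIcc (f 0) (f (Real.pi / 2)) := by
    simp only [f, Real.cos_zero, Real.sin_zero, Real.cos_pi_div_two, Real.sin_pi_div_two,
      one_smul, zero_smul, add_zero, zero_add, Set.mem_uIcc]
    rcases mul_nonpos_iff.mp h with h | h <;> tauto
  obtain ⟨θ, -, hθ⟩ := intermediate_value_uIcc hf.continuousOn hzero
  exact ⟨Real.cos θ, Real.sin θ, Real.cos_sq_add_sin_sq θ, hθ⟩

theorem exists_sum_vecMulVec_eq_and_head_dotProduct_mulVec_eq_zero (B : Matrix ι ι ℝ)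
    {r : ℕ} (y : Fin (r + 1) → ι → ℝ) (hy : ∑ k, y k ⬝ᵥ B *ᵥ y k = 0) :
    ∃ w : Fin (r + 1) → ι → ℝ, ∑ k, vecMulVec (w k) (w k) = ∑ k, vecMulVec (y k) (y k) ∧
      w 0 ⬝ᵥ B *ᵥ w 0 = 0 := by
  set q : (ι → ℝ) → ℝ := fun x => x ⬝ᵥ B *ᵥ x
  by_cases h0 : q (y 0) = 0
  · exact ⟨y, rfl, h0⟩
  obtain ⟨j, -, hj⟩ : ∃ j : Fin r, j ∈ Finset.univ ∧ q (y 0) * q (y j.succ) < 0 := by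
    apply Finset.exists_lt_of_sum_lt
    have htail : ∑ j : Fin r, q (y j.succ) = -q (y 0) := by
      rw [Fin.sum_univ_succ] at hy
      exact eq_neg_of_add_eq_zero_right hy
    rw [← Finset.mul_sum, htail, Finset.sum_const_zero, mul_neg, neg_lt_zero]
    exact mul_self_pos.mpr h0
  obtain ⟨c, s, hcs, hu⟩ := exists_cos_sin_dotProduct_mulVec_eq_zero B hj.le
  have hne : (0 : Fin (r + 1)) ≠ j.succ := (Fin.succ_ne_zero j).symm
  refine ⟨Function.update (Function.update y 0 (c • y 0 + s • y j.succ)) j.succ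
    (-s • y 0 + c • y j.succ), ?_, ?_⟩
  · exact Fintype.sum_comp_update_update (fun x => vecMulVec x x) y hne
      (vecMulVec_rotate_add_vecMulVec_rotate hcs _ _)
  · simpa [Function.update_of_ne hne] using hu

theorem exists_sum_vecMulVec_eq_and_forall_dotProduct_mulVec_eq_zero (B : Matrix ι ι ℝ) :
    ∀ {r : ℕ} (y : Fin r → ι → ℝ), ∑ k, y k ⬝ᵥ B *ᵥ y k = 0 →
      ∃ x : Fin r → ι → ℝ, ∑ k, vecMulVec (x k) (x k) = ∑ k, vecMulVec (y k) (y k) ∧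
        ∀ k, x k ⬝ᵥ B *ᵥ x k = 0
  | 0, y, _ => ⟨y, rfl, fun k => k.elim0⟩
  | r + 1, y, hy => by
    obtain ⟨w, hw, hw0⟩ := exists_sum_vecMulVec_eq_and_head_dotProduct_mulVec_eq_zero B y hy
    have htail : ∑ k : Fin r, w k.succ ⬝ᵥ B *ᵥ w k.succ = 0 := by
      have hsum : ∑ k, w k ⬝ᵥ B *ᵥ w k = 0 := by
        rw [sum_dotProduct_mulVec_self, hw, ← sum_dotProduct_mulVec_self, hy]
      rwa [Fin.sum_univ_succ, hw0, zero_add] at hsum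
    obtain ⟨x, hx, hx0⟩ :=
      exists_sum_vecMulVec_eq_and_forall_dotProduct_mulVec_eq_zero B (fun k => w k.succ) htail
    refine ⟨Fin.cons (w 0) x, ?_, Fin.cases hw0 hx0⟩
    rw [Fin.sum_univ_succ, ← hw, Fin.sum_univ_succ]
    simp only [Fin.cons_zero, Fin.cons_succ, hx]

end Matrix

theorem rankOne_decomposition_zero_general (n r : ℕ)
    (B X : Matrix (Fin n) (Fin n) ℝ)
    (hX : X.PosSemidef) (hr : X.rank = r)
    (hBX : (∑ i, ∑ j, B i j * X i j) = 0) :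
    ∃ x : Fin r → Fin n → ℝ,
      X = ∑ i, vecMulVec (x i) (x i) ∧ ∀ i, (x i) ⬝ᵥ B.mulVec (x i) = 0 := by
  obtain ⟨y, rfl⟩ := hX.exists_eq_sum_vecMulVec_of_rank_eq hr
  obtain ⟨x, hxy, hx⟩ := exists_sum_vecMulVec_eq_and_forall_dotProduct_mulVec_eq_zero B y
    (by rw [sum_dotProduct_mulVec_self, hBX])
  exact ⟨x, hxy.symm, hx⟩

/-- rank-one decomposition of a PSD matrix `X` of rank `r` with
`B • X = 0`, all of whose rank-one terms satisfy `xᵢᵀ B xᵢ = 0`. -/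
theorem rankOne_decomposition_zero (n r : ℕ)
    (B X : Matrix (Fin n) (Fin n) ℝ) (hB : B.IsSymm)
    (hX : X.PosSemidef) (hr : X.rank = r)
    (hBX : (∑ i, ∑ j, B i j * X i j) = 0) :
    ∃ x : Fin r → Fin n → ℝ,
      X = ∑ i, vecMulVec (x i) (x i) ∧ ∀ i, (x i) ⬝ᵥ B.mulVec (x i) = 0 :=
  rankOne_decomposition_zero_general n r B X hX hr hBX
end

section
/- For a ∈ ℤ and r ≥ 1 define the 3×3 symmetric matrix B(a,r) with rows (a², −a, −1/2), (−a, 1, 0), (−1/2, 0, r). Then for all integers a_1 ≠ a_2 and all reals r_1, r_2 ≥ 1, the matrix B(a_1,r_1) + B(a_2,r_2) is positive semidefinite. -/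
open Matrix

/-- The matrix `B(a,r)` of Instance 2.5 (parabola family). -/
noncomputable def parMat (a : ℤ) (r : ℝ) : Matrix (Fin 3) (Fin 3) ℝ :=
  !![(a : ℝ) ^ 2, -(a : ℝ), -(1 / 2);
     -(a : ℝ), 1, 0;
     -(1 / 2), 0, r]

/-!
Writing `x = (u, v, w)`, the quadratic form of `B(a, r)` is `(a u - v)² + r w² - u w`.
For `a₁ ≠ a₂` the two squares add up to at least `(a₁ - a₂)² u² / 2 ≥ u² / 2`, and
`u² / 2 + (r₁ + r₂) w² - 2 u w ≥ (u - 2 w)² / 2 ≥ 0` once `r₁ + r₂ ≥ 2`.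
-/

lemma parMat_isHermitian (a : ℤ) (r : ℝ) : (parMat a r).IsHermitian := by
  ext i j
  fin_cases i <;> fin_cases j <;> simp [parMat]

lemma dotProduct_parMat_mulVec (a : ℤ) (r : ℝ) (x : Fin 3 → ℝ) :
    x ⬝ᵥ parMat a r *ᵥ x = ((a : ℝ) * x 0 - x 1) ^ 2 + r * x 2 ^ 2 - x 0 * x 2 := by
  simp only [parMat, mulVec, dotProduct, Fin.sum_univ_three, of_apply, cons_val',
    cons_val_zero, cons_val_one, cons_val_two, empty_val', cons_val_fin_one, head_cons,
    tail_cons, head_fin_const]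
  ring

lemma one_le_sq_intCast_sub {R : Type*} [Ring R] [LinearOrder R] [IsStrictOrderedRing R]
    {a b : ℤ} (h : a ≠ b) : (1 : R) ≤ ((a : R) - b) ^ 2 := by
  rw [one_le_sq_iff_one_le_abs, ← Int.cast_sub, ← Int.cast_abs]
  exact_mod_cast Int.one_le_abs (sub_ne_zero_of_ne h)

/-- for distinct integers `a₁ ≠ a₂` and `r₁, r₂ ≥ 1`,
`B(a₁,r₁) + B(a₂,r₂)` is positive semidefinite. -/
theorem parMat_add_posSemidef (a₁ a₂ : ℤ) (ha : a₁ ≠ a₂)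
    (r₁ r₂ : ℝ) (hr₁ : 1 ≤ r₁) (hr₂ : 1 ≤ r₂) :
    (parMat a₁ r₁ + parMat a₂ r₂).PosSemidef := by
  refine posSemidef_iff_dotProduct_mulVec.mpr
    ⟨(parMat_isHermitian a₁ r₁).add (parMat_isHermitian a₂ r₂), fun x => ?_⟩
  rw [star_trivial, add_mulVec, dotProduct_add, dotProduct_parMat_mulVec,
    dotProduct_parMat_mulVec]
  have hd : (1 : ℝ) ≤ ((a₁ : ℝ) - a₂) ^ 2 := one_le_sq_intCast_sub ha
  nlinarith [sq_nonneg ((a₁ : ℝ) * x 0 - x 1 + (a₂ * x 0 - x 1)), sq_nonneg (x 0 - 2 * x 2),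
    mul_nonneg (sub_nonneg.2 hd) (sq_nonneg (x 0)),
    mul_nonneg (sub_nonneg.2 hr₁) (sq_nonneg (x 2)), mul_nonneg (sub_nonneg.2 hr₂) (sq_nonneg (x 2))]
end
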